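/- Let G be a simple graph containing no induced diamond and no induced P_2 + P_3 (an edge plus a path on three vertices, disjoint). Let X be a maximal clique of G with |X| ≥ 5. Then the induced subgraph G \ X (on the vertices outside X) contains no induced path on three vertices; equivalently, G \ X is a disjoint union of cliques. -/

import Mathlib

/-- `G` contains an induced copy of `H`. -/
def HasInducedCopy {α β : Type*} (H : SimpleGraph α) (G : SimpleGraph β) : Prop :=
  ∃ f : α ↪ β, ∀ a b : α, G.Adj (f a) (f b) ↔ H.Adj a b

/-- The diamond: `K₄` minus the edge `{0,1}`. -/
def diamond : SimpleGraph (Fin 4) :=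
  SimpleGraph.fromRel (fun a b => ¬(a = 0 ∧ b = 1) ∧ ¬(a = 1 ∧ b = 0))

/-- `P₂ + P₃`: the edge `{0,1}` and the path `2-3-4`. -/
def p2PlusP3 : SimpleGraph (Fin 5) :=
  SimpleGraph.fromRel (fun a b => (a = 0 ∧ b = 1) ∨ (a = 2 ∧ b = 3) ∨ (a = 3 ∧ b = 4))

set_option maxHeartbeats 2000000 in
theorem stmt8 {V : Type*} [Fintype V] [DecidableEq V] (G : SimpleGraph V)
    (hdiamond : ¬ HasInducedCopy diamond G)
    (hp2p3 : ¬ HasInducedCopy p2PlusP3 G)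
    (X : Finset V) (hX : G.IsClique (X : Set V)) (hcard : 5 ≤ X.card)
    (hmax : ∀ w ∉ X, ∃ u ∈ X, ¬ G.Adj w u) :
    ∀ a b c : V, a ∉ X → b ∉ X → c ∉ X →
      G.Adj a b → G.Adj b c → a ≠ c → G.Adj a c := by
  classical
  -- Step 1: every vertex outside X has at most one neighbour in X.
  have key : ∀ w ∉ X, ∀ u ∈ X, ∀ v ∈ X, G.Adj w u → G.Adj w v → u = v := by
    intro w hw u hu v hv hwu hwv
    by_contra huv
    obtain ⟨u', hu', hwu'⟩ := hmax w hw
    have hu'u : u' ≠ u := fun h => hwu' (h ▸ hwu)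
    have hu'v : u' ≠ v := fun h => hwu' (h ▸ hwv)
    have hwX : w ∉ (X : Set V) := hw
    have hwu'2 : ¬ G.Adj u' w := fun h => hwu' h.symm
    apply hdiamond
    refine ⟨⟨![w, u', u, v], ?_⟩, ?_⟩
    · intro i j hij
      fin_cases i <;> fin_cases j <;> simp_all <;>
        first
        | rfl
        | (exfalso; first
            | exact hwX (hij ▸ hu')
            | exact hwX (hij ▸ hu)
            | exact hwX (hij ▸ hv)
            | exact hwX (hij.symm ▸ hu')
            | exact hwX (hij.symm ▸ hu)
            | exact hwX (hij.symm ▸ hv)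
            | exact hu'u hij | exact hu'v hij | exact huv hij
            | exact hu'u hij.symm | exact hu'v hij.symm | exact huv hij.symm)
    · intro i j
      have h1 : G.Adj u' u := hX hu' hu hu'u
      have h2 : G.Adj u' v := hX hu' hv hu'v
      have h3 : G.Adj u v := hX hu hv huv
      show G.Adj (![w, u', u, v] i) (![w, u', u, v] j) ↔ diamond.Adj i j
      fin_cases i <;> fin_cases j <;>
        simp [diamond, SimpleGraph.fromRel_adj, hwu, hwv, hwu', hwu'2, h1, h2, h3,
          hwu.symm, hwv.symm, h1.symm, h2.symm, h3.symm, G.irrefl] <;> decide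
  intro a b c ha hb hc hab hbc hac
  by_contra hnac
  -- Step 2: find two vertices of X adjacent to none of a, b, c.
  set Na : Finset V := X.filter (fun x => G.Adj a x) with hNa
  set Nb : Finset V := X.filter (fun x => G.Adj b x) with hNb
  set Nc : Finset V := X.filter (fun x => G.Adj c x) with hNc
  have hka : Na.card ≤ 1 := Finset.card_le_one.mpr (by
    intro x hx y hy
    simp only [hNa, Finset.mem_filter] at hx hy
    exact key a ha x hx.1 y hy.1 hx.2 hy.2)
  have hkb : Nb.card ≤ 1 := Finset.card_le_one.mpr (by
    intro x hx y hy
    simp only [hNb, Finset.mem_filter] at hx hy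
    exact key b hb x hx.1 y hy.1 hx.2 hy.2)
  have hkc : Nc.card ≤ 1 := Finset.card_le_one.mpr (by
    intro x hx y hy
    simp only [hNc, Finset.mem_filter] at hx hy
    exact key c hc x hx.1 y hy.1 hx.2 hy.2)
  have hdiff : 2 ≤ (X \ (Na ∪ Nb ∪ Nc)).card := by
    have h1 : (Na ∪ Nb ∪ Nc).card ≤ 3 := by
      calc (Na ∪ Nb ∪ Nc).card ≤ (Na ∪ Nb).card + Nc.card := Finset.card_union_le _ _
        _ ≤ Na.card + Nb.card + Nc.card := by
            have := Finset.card_union_le Na Nb; omega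
        _ ≤ 3 := by omega
    have h2 := Finset.le_card_sdiff (Na ∪ Nb ∪ Nc) X
    omega
  obtain ⟨s, hs, hscard⟩ := Finset.exists_subset_card_eq hdiff
  obtain ⟨x, y, hxy, hsxy⟩ := Finset.card_eq_two.mp hscard
  have hx := hs (hsxy ▸ Finset.mem_insert_self x {y})
  have hy := hs (hsxy ▸ Finset.mem_insert_of_mem (Finset.mem_singleton_self y))
  rw [Finset.mem_sdiff] at hx hy
  simp only [Finset.mem_union, hNa, hNb, hNc, Finset.mem_filter, not_or, not_and] at hx hy
  have hxX : x ∈ X := hx.1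
  have hxa : ¬ G.Adj a x := fun h => hx.2.1.1 hxX h
  have hxb : ¬ G.Adj b x := fun h => hx.2.1.2 hxX h
  have hxc : ¬ G.Adj c x := fun h => hx.2.2 hxX h
  have hyX : y ∈ X := hy.1
  have hya : ¬ G.Adj a y := fun h => hy.2.1.1 hyX h
  have hyb : ¬ G.Adj b y := fun h => hy.2.1.2 hyX h
  have hyc : ¬ G.Adj c y := fun h => hy.2.2 hyX h
  have hXx : x ∈ (X : Set V) := hxX
  have hXy : y ∈ (X : Set V) := hyX
  have hxyadj : G.Adj x y := hX hXx hXy hxy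
  have hab' : a ≠ b := hab.ne
  have hbc' : b ≠ c := hbc.ne
  apply hp2p3
  refine ⟨⟨![x, y, a, b, c], ?_⟩, ?_⟩
  · intro i j hij
    fin_cases i <;> fin_cases j <;> simp_all <;>
      first
      | rfl
      | (exfalso; first
          | exact ha (hij ▸ hxX) | exact hb (hij ▸ hxX) | exact hc (hij ▸ hxX)
          | exact ha (hij ▸ hyX) | exact hb (hij ▸ hyX) | exact hc (hij ▸ hyX)
          | exact ha (hij.symm ▸ hxX) | exact hb (hij.symm ▸ hxX) | exact hc (hij.symm ▸ hxX)
          | exact ha (hij.symm ▸ hyX) | exact hb (hij.symm ▸ hyX) | exact hc (hij.symm ▸ hyX)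
          | exact hxy hij | exact hxy hij.symm
          | exact hab' hij | exact hab' hij.symm
          | exact hbc' hij | exact hbc' hij.symm
          | exact hac hij | exact hac hij.symm)
  · intro i j
    have hax : ¬ G.Adj x a := fun h => hxa h.symm
    have hbx : ¬ G.Adj x b := fun h => hxb h.symm
    have hcx : ¬ G.Adj x c := fun h => hxc h.symm
    have hay : ¬ G.Adj y a := fun h => hya h.symm
    have hby : ¬ G.Adj y b := fun h => hyb h.symm
    have hcy : ¬ G.Adj y c := fun h => hyc h.symm
    have hca : ¬ G.Adj c a := fun h => hnac h.symm
    show G.Adj (![x, y, a, b, c] i) (![x, y, a, b, c] j) ↔ p2PlusP3.Adj i j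
    fin_cases i <;> fin_cases j <;>
      simp [p2PlusP3, SimpleGraph.fromRel_adj, hxyadj, hxyadj.symm, hab, hab.symm,
        hbc, hbc.symm, hnac, hca, hxa, hxb, hxc, hya, hyb, hyc,
        hax, hbx, hcx, hay, hby, hcy, G.irrefl] <;> decide
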